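/- The Hopfield update rule ζ^{new} = X softmax(β Xᵀ ζ) is exactly one gradient-descent step on the energy E(ζ; X) = ½ ζᵀζ − lse(Xᵀζ, β) with step size η = 1: ζ − 1·∇_ζ E(ζ; X) = X softmax(β Xᵀ ζ). -/

import Mathlib

/-! With `xᵢ` the columns of `X`, the energy is `½‖ζ‖² − lse(β, (⟪xᵢ, ζ⟫)ᵢ)`. The derivative of
`v ↦ β⁻¹ log ∑ exp (β vᵢ)` is `softmax (β v)`, so by the chain rule through `ζ ↦ (⟪xᵢ, ζ⟫)ᵢ` the
lse term has gradient `∑ᵢ softmax(β⟪x, ζ⟫)ᵢ xᵢ`, while `½‖ζ‖²` has gradient `ζ`; the `ζ` cancels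
in `ζ − ∇E(ζ)`. -/

open Real InnerProductSpace

noncomputable def logSumExp {ι : Type*} [Fintype ι] (β : ℝ) (v : ι → ℝ) : ℝ :=
  β⁻¹ * log (∑ i, exp (β * v i))

noncomputable def softmax {ι : Type*} [Fintype ι] (v : ι → ℝ) (i : ι) : ℝ :=
  exp (v i) / ∑ j, exp (v j)

theorem hasFDerivAt_logSumExp {ι : Type*} [Fintype ι] {β : ℝ} (hβ : β ≠ 0) (v : ι → ℝ) :
    HasFDerivAt (logSumExp β)
      (∑ i, softmax (β • v) i • (ContinuousLinearMap.proj i : (ι → ℝ) →L[ℝ] ℝ)) v := by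
  cases isEmpty_or_nonempty ι
  · -- `log 0 = 0`, so over an empty index type `logSumExp β` vanishes identically.
    have hzero : logSumExp β = fun _ : ι → ℝ => (0 : ℝ) := by funext w; simp [logSumExp]
    simpa [hzero] using hasFDerivAt_const (0 : ℝ) v
  have hS : 0 < ∑ i, exp (β * v i) :=
    Finset.sum_pos (fun i _ => exp_pos _) (Finset.univ_nonempty (α := ι))
  have hsum : HasFDerivAt (fun w : ι → ℝ => ∑ i, exp (β * w i))
      (∑ i, exp (β * v i) • β • (ContinuousLinearMap.proj i : (ι → ℝ) →L[ℝ] ℝ)) v :=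
    HasFDerivAt.fun_sum fun i _ => ((hasFDerivAt_apply i v).const_mul β).exp
  refine ((hsum.log hS.ne').const_mul β⁻¹).congr_fderiv ?_
  ext w
  simp only [smul_apply, sum_apply, ContinuousLinearMap.proj_apply, smul_eq_mul, Finset.mul_sum,
    softmax, Pi.smul_apply]
  refine Finset.sum_congr rfl fun i _ => ?_
  field_simp

section InnerProductSpace

variable {E ι : Type*} [NormedAddCommGroup E] [InnerProductSpace ℝ E] [Fintype ι]

noncomputable def hopfieldEnergy (β : ℝ) (x : ι → E) (z : E) : ℝ :=
  1 / 2 * ‖z‖ ^ 2 - logSumExp β fun i => ⟪x i, z⟫_ℝ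

variable [CompleteSpace E]

theorem hasGradientAt_half_norm_sq (ζ : E) :
    HasGradientAt (fun z => (1 / 2 : ℝ) * ‖z‖ ^ 2) ζ ζ := by
  rw [hasGradientAt_iff_hasFDerivAt]
  refine ((hasStrictFDerivAt_norm_sq ζ).hasFDerivAt.const_mul (1 / 2 : ℝ)).congr_fderiv ?_
  ext z
  simp

theorem hasGradientAt_logSumExp_inner {β : ℝ} (hβ : β ≠ 0) (x : ι → E) (ζ : E) :
    HasGradientAt (fun z => logSumExp β fun i => ⟪x i, z⟫_ℝ)
      (∑ i, softmax (fun i => β * ⟪x i, ζ⟫_ℝ) i • x i) ζ := by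
  rw [hasGradientAt_iff_hasFDerivAt]
  refine ((hasFDerivAt_logSumExp hβ _).comp ζ
    (ContinuousLinearMap.pi fun i => innerSL ℝ (x i)).hasFDerivAt).congr_fderiv ?_
  ext z
  simp only [ContinuousLinearMap.coe_pi', coe_innerSL_apply, ContinuousLinearMap.comp_apply,
    sum_apply, smul_apply, ContinuousLinearMap.proj_apply, smul_eq_mul, map_sum, map_smul,
    toDual_apply_apply]
  rfl

theorem hasGradientAt_hopfieldEnergy {β : ℝ} (hβ : β ≠ 0) (x : ι → E) (ζ : E) :
    HasGradientAt (hopfieldEnergy β x)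
      (ζ - ∑ i, softmax (fun i => β * ⟪x i, ζ⟫_ℝ) i • x i) ζ := by
  rw [hasGradientAt_iff_hasFDerivAt, map_sub]
  exact (hasGradientAt_iff_hasFDerivAt.mp (hasGradientAt_half_norm_sq ζ)).sub
    (hasGradientAt_iff_hasFDerivAt.mp (hasGradientAt_logSumExp_inner hβ x ζ))

theorem sub_gradient_hopfieldEnergy {β : ℝ} (hβ : β ≠ 0) (x : ι → E) (ζ : E) :
    ζ - gradient (hopfieldEnergy β x) ζ = ∑ i, softmax (fun i => β * ⟪x i, ζ⟫_ℝ) i • x i := by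
  rw [(hasGradientAt_hopfieldEnergy hβ x ζ).gradient, sub_sub_cancel]

end InnerProductSpace

/-- The Hopfield update `ζ^{new} = X softmax(β Xᵀ ζ)` is exactly one gradient-descent
step with step size `η = 1` on `E(ζ; X) = ½ ζᵀζ − lse(Xᵀζ, β)`:
`ζ − 1 • ∇_ζ E(ζ; X) = X softmax(β Xᵀ ζ)`. -/
theorem hopfield_update_is_gradient_step (d N : ℕ) (β : ℝ) (hβ : 0 < β)
    (X : Fin d → Fin N → ℝ) (ζ : EuclideanSpace ℝ (Fin d)) :
    ζ - (1 : ℝ) •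
        gradient
          (fun z : EuclideanSpace ℝ (Fin d) =>
            (1 / 2) * ∑ j, z j ^ 2 -
              β⁻¹ * Real.log (∑ i, Real.exp (β * ∑ j, X j i * z j))) ζ =
      (WithLp.toLp 2 (fun j => ∑ i, (Real.exp (β * ∑ j', X j' i * ζ j') /
            ∑ i', Real.exp (β * ∑ j', X j' i' * ζ j')) * X j i) :
        EuclideanSpace ℝ (Fin d)) := by
  set x : Fin N → EuclideanSpace ℝ (Fin d) := fun i => WithLp.toLp 2 fun j => X j i
  have hinner : ∀ i z, ⟪x i, z⟫_ℝ = ∑ j, X j i * z j := fun i z => by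
    simp [x, PiLp.inner_apply, mul_comm]
  have hE : (fun z : EuclideanSpace ℝ (Fin d) =>
      (1 / 2) * ∑ j, z j ^ 2 - β⁻¹ * Real.log (∑ i, Real.exp (β * ∑ j, X j i * z j))) =
      hopfieldEnergy β x := by
    funext z
    simp only [hopfieldEnergy, logSumExp, hinner, EuclideanSpace.real_norm_sq_eq]
  rw [hE, one_smul, sub_gradient_hopfieldEnergy hβ.ne']
  ext j
  simp [softmax, hinner, x]
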